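/- arXiv:2402.08758 — 14 statements merged into one kernel-verified Lean document; each statement's English description precedes it below -/
import Mathlib

section
/- In the one-dimensional strategic classification setting, fix a finite set H ⊆ ℝ of thresholds and nonnegative weights p with Σ_{t∈H} p t = 1. Let x₁ ≤ x₂, and for i = 1, 2 let z_i be the least maximizer of u x_i on [x_i, ∞), i.e., z_i ≥ x_i, u x_i z_i ≥ u x_i w for every w ≥ x_i, and z_i ≤ w for every w ≥ x_i with u x_i w = u x_i z_i. Then z₁ ≤ z₂. (Lemma 'facts', part 2: the best response is monotone in the agent's position.) -/
/-- The utility of agent `x` from moving to `x'`, given a finite set `H` of thresholds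
with weights `p`: the probability of passing minus the manipulation cost. -/
noncomputable def stratUtil (H : Finset ℝ) (p : ℝ → ℝ) (x x' : ℝ) : ℝ :=
  (∑ t ∈ H.filter (fun t => t ≤ x'), p t) - |x' - x|

/-- `z` is the least maximizer of the utility of agent `x` on `[x, ∞)`. -/
def IsLeastMax (H : Finset ℝ) (p : ℝ → ℝ) (x z : ℝ) : Prop :=
  x ≤ z ∧ (∀ w : ℝ, x ≤ w → stratUtil H p x w ≤ stratUtil H p x z) ∧
    (∀ w : ℝ, x ≤ w → stratUtil H p x w = stratUtil H p x z → z ≤ w)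

/-- Lemma `facts`, part 2: the best response is monotone in the agent's position. -/
theorem stmt1 (H : Finset ℝ) (p : ℝ → ℝ) (hp : ∀ t ∈ H, 0 ≤ p t)
    (hsum : ∑ t ∈ H, p t = 1) (x₁ x₂ z₁ z₂ : ℝ) (hx : x₁ ≤ x₂)
    (hz₁ : IsLeastMax H p x₁ z₁) (hz₂ : IsLeastMax H p x₂ z₂) :
    z₁ ≤ z₂ := by
  by_contra hcon
  push_neg at hcon
  have hx1z2 : x₁ ≤ z₂ := hx.trans hz₂.1
  have hx2z1 : x₂ ≤ z₁ := hz₂.1.trans hcon.le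
  have h1 := hz₁.2.1 z₂ hx1z2
  have h2 := hz₂.2.1 z₁ hx2z1
  have heq : stratUtil H p x₁ z₂ = stratUtil H p x₁ z₁ := by
    simp only [stratUtil, abs_of_nonneg (sub_nonneg.2 hx1z2),
      abs_of_nonneg (sub_nonneg.2 hz₁.1),
      abs_of_nonneg (sub_nonneg.2 hz₂.1),
      abs_of_nonneg (sub_nonneg.2 hx2z1)] at h1 h2 ⊢
    linarith
  exact absurd (hz₁.2.2 z₂ hx1z2 heq) (not_le.2 hcon)
end

section
/- In the one-dimensional strategic classification setting, fix a finite set H ⊆ ℝ of thresholds and nonnegative weights p with Σ_{t∈H} p t = 1. Let x₁ ≤ x₂, and for i = 1, 2 let z_i be the least maximizer of u x_i on [x_i, ∞), i.e., z_i ≥ x_i, u x_i z_i ≥ u x_i w for every w ≥ x_i, and z_i ≤ w for every w ≥ x_i with u x_i w = u x_i z_i. If z₁ ≥ x₂, then z₁ = z₂. (Lemma 'facts', part 3.) -/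
/-- Lemma `facts`, part 3: if the best response of `x₁` already lies above `x₂ ≥ x₁`,
then `x₁` and `x₂` have the same best response. -/
theorem stmt2 (H : Finset ℝ) (p : ℝ → ℝ) (hp : ∀ t ∈ H, 0 ≤ p t)
    (hsum : ∑ t ∈ H, p t = 1) (x₁ x₂ z₁ z₂ : ℝ) (hx : x₁ ≤ x₂)
    (hz₁ : IsLeastMax H p x₁ z₁) (hz₂ : IsLeastMax H p x₂ z₂)
    (hz₁x₂ : x₂ ≤ z₁) :
    z₁ = z₂ := by
  obtain ⟨h1x, h1max, h1least⟩ := hz₁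
  obtain ⟨h2x, h2max, h2least⟩ := hz₂
  have key : ∀ w : ℝ, x₂ ≤ w →
      stratUtil H p x₂ w = stratUtil H p x₁ w + (x₂ - x₁) := by
    intro w hw
    have h1 : x₁ ≤ w := le_trans hx hw
    unfold stratUtil
    rw [abs_of_nonneg (by linarith), abs_of_nonneg (by linarith)]
    ring
  -- z₁ also maximizes u x₂ on [x₂, ∞)
  have hmaxz₁ : ∀ w : ℝ, x₂ ≤ w → stratUtil H p x₂ w ≤ stratUtil H p x₂ z₁ := by
    intro w hw
    rw [key w hw, key z₁ hz₁x₂]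
    have := h1max w (le_trans hx hw)
    linarith
  have heq : stratUtil H p x₂ z₁ = stratUtil H p x₂ z₂ :=
    le_antisymm (h2max z₁ hz₁x₂) (hmaxz₁ z₂ h2x)
  have h21 : z₂ ≤ z₁ := h2least z₁ hz₁x₂ heq
  have heq' : stratUtil H p x₁ z₂ = stratUtil H p x₁ z₁ := by
    have k1 := key z₁ hz₁x₂
    have k2 := key z₂ h2x
    linarith
  have h12 : z₁ ≤ z₂ := h1least z₂ (le_trans hx h2x) heq'
  linarith
end

section
/- In the one-dimensional strategic classification setting, fix a finite set H ⊆ ℝ of thresholds and nonnegative weights p with Σ_{t∈H} p t = 1. For every agent x ∈ ℝ: (i) there exists z ∈ {x} ∪ {t ∈ H : t > x} that maximizes u x on [x, ∞) (in particular, the maximum of u x on [x,∞) is attained); and (ii) every least maximizer of u x on [x, ∞) belongs to {x} ∪ {t ∈ H : t > x}. (Lemma 'bestresponse-charac': the best response is either to stay or to move exactly to a threshold in H above x.) -/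
/-- Every `w ≥ x` is dominated by a candidate in `insert x (H.filter (x < ·))`
that is at most `w`. -/
lemma strat_dominated (H : Finset ℝ) (p : ℝ → ℝ) (x w : ℝ) (hw : x ≤ w) :
    ∃ z ∈ insert x (H.filter (fun t => x < t)), z ≤ w ∧
      stratUtil H p x w ≤ stratUtil H p x z := by
  set C := insert x (H.filter (fun t => x < t)) with hC
  set D := C.filter (fun t => t ≤ w) with hD
  have hxD : x ∈ D := by simp [hD, hC, hw]
  have hne : D.Nonempty := ⟨x, hxD⟩
  refine ⟨D.max' hne, ?_, ?_, ?_⟩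
  · exact (Finset.mem_filter.mp (D.max'_mem hne)).1
  · exact (Finset.mem_filter.mp (D.max'_mem hne)).2
  · set z := D.max' hne with hz
    have hxz : x ≤ z := Finset.le_max' D x hxD
    have hzw : z ≤ w := (Finset.mem_filter.mp (D.max'_mem hne)).2
    have hfilt : H.filter (fun t => t ≤ w) = H.filter (fun t => t ≤ z) := by
      apply Finset.ext
      intro t
      simp only [Finset.mem_filter]
      constructor
      · rintro ⟨htH, htw⟩
        refine ⟨htH, ?_⟩
        rcases le_or_gt t x with h | h
        · exact h.trans hxz
        · apply Finset.le_max' D t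
          rw [hD, Finset.mem_filter]
          exact ⟨by simp [hC, htH, h], htw⟩
      · rintro ⟨htH, htz⟩
        exact ⟨htH, htz.trans hzw⟩
    unfold stratUtil
    rw [hfilt]
    have : |z - x| ≤ |w - x| := by
      rw [abs_of_nonneg (by linarith), abs_of_nonneg (by linarith)]
      linarith
    linarith

/-- Lemma `bestresponse-charac`: (i) the maximum of the utility of agent `x` on `[x, ∞)`
is attained at a point of `{x} ∪ {t ∈ H : t > x}`; (ii) every least maximizer of the
utility of `x` on `[x, ∞)` belongs to `{x} ∪ {t ∈ H : t > x}`. -/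
theorem stmt3 (H : Finset ℝ) (p : ℝ → ℝ) (hp : ∀ t ∈ H, 0 ≤ p t)
    (hsum : ∑ t ∈ H, p t = 1) (x : ℝ) :
    (∃ z : ℝ, (z = x ∨ (z ∈ H ∧ x < z)) ∧ x ≤ z ∧
      ∀ w : ℝ, x ≤ w → stratUtil H p x w ≤ stratUtil H p x z) ∧
    (∀ z : ℝ, IsLeastMax H p x z → z = x ∨ (z ∈ H ∧ x < z)) := by
  set C := insert x (H.filter (fun t => x < t)) with hC
  have memC : ∀ z ∈ C, z = x ∨ (z ∈ H ∧ x < z) := by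
    intro z hz
    rw [hC, Finset.mem_insert, Finset.mem_filter] at hz
    tauto
  have memCge : ∀ z ∈ C, x ≤ z := by
    intro z hz
    rcases memC z hz with h | h
    · exact h.ge
    · exact h.2.le
  constructor
  · obtain ⟨z0, hz0C, hz0max⟩ :=
      C.exists_max_image (stratUtil H p x) ⟨x, by simp [hC]⟩
    refine ⟨z0, memC z0 hz0C, memCge z0 hz0C, ?_⟩
    intro w hw
    obtain ⟨z, hzC, _, hle⟩ := strat_dominated H p x w hw
    exact hle.trans (hz0max z hzC)
  · rintro z ⟨hxz, hmax, hleast⟩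
    obtain ⟨z', hz'C, hz'z, hle⟩ := strat_dominated H p x z hxz
    have hxz' : x ≤ z' := memCge z' hz'C
    have heq : stratUtil H p x z' = stratUtil H p x z :=
      le_antisymm (hmax z' hxz') hle
    have : z ≤ z' := hleast z' hxz' heq
    have : z = z' := le_antisymm this hz'z
    rw [this]
    exact memC z' hz'C
end

section
/- In the one-dimensional strategic classification setting, fix a finite set H ⊆ ℝ of thresholds, nonnegative weights p with Σ_{t∈H} p t = 1, and let BR : ℝ → ℝ be the function assigning to each x the least maximizer of u x on [x, ∞). Let h ∈ H be a deployed threshold with p h > 0, and let R = inf{x ∈ ℝ : BR(x) ≥ h} (a well-defined real since BR(h) ≥ h). Then for every x ∈ ℝ: BR(x) ≥ h if and only if x > R. (Key step of Lemma 'learnersutility': under the deployed threshold h, an agent x is classified positive after best responding iff x > R.) -/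
noncomputable def Fcum (H : Finset ℝ) (p : ℝ → ℝ) (x : ℝ) : ℝ :=
  ∑ t ∈ H.filter (fun t => t ≤ x), p t

lemma util_eq (H : Finset ℝ) (p : ℝ → ℝ) {x w : ℝ} (hxw : x ≤ w) :
    stratUtil H p x w = Fcum H p w - w + x := by
  unfold stratUtil Fcum
  rw [abs_of_nonneg (by linarith)]
  ring

lemma Fcum_mono (H : Finset ℝ) (p : ℝ → ℝ) (hp : ∀ t ∈ H, 0 ≤ p t) {a b : ℝ}
    (hab : a ≤ b) : Fcum H p a ≤ Fcum H p b := by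
  apply Finset.sum_le_sum_of_subset_of_nonneg
  · intro t ht
    simp only [Finset.mem_filter] at ht ⊢
    exact ⟨ht.1, ht.2.trans hab⟩
  · intro t ht _
    exact hp t (Finset.mem_filter.mp ht).1

lemma Fcum_nonneg (H : Finset ℝ) (p : ℝ → ℝ) (hp : ∀ t ∈ H, 0 ≤ p t) (x : ℝ) :
    0 ≤ Fcum H p x :=
  Finset.sum_nonneg fun t ht => hp t (Finset.mem_filter.mp ht).1

lemma Fcum_le_one (H : Finset ℝ) (p : ℝ → ℝ) (hp : ∀ t ∈ H, 0 ≤ p t)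
    (hsum : ∑ t ∈ H, p t = 1) (x : ℝ) : Fcum H p x ≤ 1 := by
  rw [← hsum]
  exact Finset.sum_le_sum_of_subset_of_nonneg (Finset.filter_subset _ _)
    (fun t ht _ => hp t ht)

lemma Fcum_jump (H : Finset ℝ) (p : ℝ → ℝ) (hp : ∀ t ∈ H, 0 ≤ p t) {h w : ℝ}
    (hh : h ∈ H) (hw : w < h) : Fcum H p w + p h ≤ Fcum H p h := by
  have hsub : insert h (H.filter (fun t => t ≤ w)) ⊆ H.filter (fun t => t ≤ h) := by
    intro t ht
    rcases Finset.mem_insert.mp ht with rfl | ht'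
    · exact Finset.mem_filter.mpr ⟨hh, le_rfl⟩
    · have := Finset.mem_filter.mp ht'
      exact Finset.mem_filter.mpr ⟨this.1, this.2.trans hw.le⟩
  have hnot : h ∉ H.filter (fun t => t ≤ w) := by
    simp only [Finset.mem_filter]
    rintro ⟨-, hle⟩
    linarith
  have := Finset.sum_le_sum_of_subset_of_nonneg hsub
    (fun t ht _ => hp t (Finset.mem_filter.mp ht).1)
  rw [Finset.sum_insert hnot] at this
  unfold Fcum
  linarith

/-- Key step of Lemma `learnersutility`: with `R = inf {x : BR(x) ≥ h}`, an agent `x`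
passes the deployed threshold `h` after best responding iff `x > R`. -/
theorem stmt5 (H : Finset ℝ) (p : ℝ → ℝ) (hp : ∀ t ∈ H, 0 ≤ p t)
    (hsum : ∑ t ∈ H, p t = 1) (h : ℝ) (hh : h ∈ H) (hph : 0 < p h)
    (BR : ℝ → ℝ) (hBR : ∀ x : ℝ, IsLeastMax H p x (BR x)) :
    ∀ x : ℝ, h ≤ BR x ↔ sInf {y : ℝ | h ≤ BR y} < x := by
  classical
  obtain ⟨g, hg⟩ : ∃ g : ℝ → ℝ, g = fun w => Fcum H p w - w := ⟨_, rfl⟩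
  have hBR_ge : ∀ x, x ≤ BR x := fun x => (hBR x).1
  have hg_max : ∀ x w, x ≤ w → g w ≤ g (BR x) := by
    intro x w hw
    have := (hBR x).2.1 w hw
    rw [util_eq H p hw, util_eq H p (hBR_ge x)] at this
    simp only [hg]
    linarith
  have hg_least : ∀ x w, x ≤ w → g w = g (BR x) → BR x ≤ w := by
    intro x w hw heq
    apply (hBR x).2.2 w hw
    rw [util_eq H p hw, util_eq H p (hBR_ge x)]
    simp only [hg] at heq
    linarith
  -- S is upward closed
  have L1 : ∀ x x', x ≤ x' → h ≤ BR x → h ≤ BR x' := by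
    intro x x' hxx' hx
    rcases le_or_gt h x' with hcase | hcase
    · exact hcase.trans (hBR_ge x')
    · have h1 : x' ≤ BR x := (hcase.trans_le hx).le
      have h2 : g (BR x) ≤ g (BR x') := hg_max x' (BR x) h1
      have h3 : g (BR x') ≤ g (BR x) := hg_max x (BR x') (hxx'.trans (hBR_ge x'))
      have h4 : BR x ≤ BR x' := hg_least x (BR x') (hxx'.trans (hBR_ge x')) (le_antisymm h3 h2)
      linarith
  -- every member of S has a smaller member
  have L2 : ∀ x, h ≤ BR x → ∃ y, y < x ∧ h ≤ BR y := by
    intro x hx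
    rcases lt_trichotomy x h with hlt | heq | hgt
    · -- x < h ≤ BR x
      have hgx_lt : g x < g (BR x) := by
        rcases (hg_max x x le_rfl).lt_or_eq with h' | h'
        · exact h'
        · have := hg_least x x le_rfl h'
          linarith
      obtain ⟨δ, hδ⟩ : ∃ δ : ℝ, δ = g (BR x) - g x := ⟨_, rfl⟩
      have hδpos : 0 < δ := by rw [hδ]; linarith
      refine ⟨x - δ / 2, by linarith, ?_⟩
      by_contra hc
      push_neg at hc
      have hy_le : x - δ / 2 ≤ BR (x - δ / 2) := hBR_ge _
      have hzy : x - δ / 2 ≤ BR x := by linarith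
      have hmax : g (BR x) ≤ g (BR (x - δ / 2)) := hg_max (x - δ / 2) (BR x) hzy
      rcases lt_or_ge (BR (x - δ / 2)) x with hcase | hcase
      · -- BR y < x : g (BR y) ≤ F x - BR y ≤ g x + δ/2 < g (BR x)
        have hF : Fcum H p (BR (x - δ / 2)) ≤ Fcum H p x := Fcum_mono H p hp hcase.le
        have : g (BR (x - δ / 2)) ≤ g x + δ / 2 := by
          simp only [hg]
          have : x - BR (x - δ / 2) ≤ δ / 2 := by linarith
          linarith
        linarith
      · -- BR y ≥ x : then g (BR y) = g (BR x), so BR x ≤ BR y < h ≤ BR x, contradiction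
        have h3 : g (BR (x - δ / 2)) ≤ g (BR x) := hg_max x (BR (x - δ / 2)) hcase
        have h4 : BR x ≤ BR (x - δ / 2) := hg_least x _ hcase (le_antisymm h3 hmax)
        linarith
    · -- x = h : use the jump of size p h at h
      subst heq
      refine ⟨x - p x / 2, by linarith, ?_⟩
      by_contra hc
      push_neg at hc
      have hy_le : x - p x / 2 ≤ BR (x - p x / 2) := hBR_ge _
      have hmax : g x ≤ g (BR (x - p x / 2)) := hg_max (x - p x / 2) x (by linarith)
      have hjump : Fcum H p (BR (x - p x / 2)) + p x ≤ Fcum H p x :=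
        Fcum_jump H p hp hh hc
      have : g (BR (x - p x / 2)) ≤ g x - p x / 2 := by
        simp only [hg]
        have : x - BR (x - p x / 2) ≤ p x / 2 := by linarith
        linarith
      linarith
    · -- x > h : any y in (h, x) works
      refine ⟨(x + h) / 2, by linarith, ?_⟩
      have := hBR_ge ((x + h) / 2)
      linarith
  -- S nonempty and bounded below
  have hne : h ∈ {y : ℝ | h ≤ BR y} := hBR_ge h
  have hbdd : BddBelow {y : ℝ | h ≤ BR y} := by
    refine ⟨h - 1, fun y hy => ?_⟩
    have hy' : h ≤ BR y := hy
    have h1 : g y ≤ g (BR y) := hg_max y y le_rfl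
    have h2 : Fcum H p (BR y) ≤ 1 := Fcum_le_one H p hp hsum _
    have h3 : 0 ≤ Fcum H p y := Fcum_nonneg H p hp y
    simp only [hg] at h1
    linarith
  intro x
  constructor
  · intro hx
    obtain ⟨y, hyx, hy⟩ := L2 x hx
    exact lt_of_le_of_lt (csInf_le hbdd hy) hyx
  · intro hx
    obtain ⟨y, hy, hyx⟩ := exists_lt_of_csInf_lt ⟨h, hne⟩ hx
    exact L1 y x hyx.le hy
end

section
/- In the one-dimensional strategic classification setting, fix a finite set H ⊆ ℝ of thresholds, nonnegative weights p with Σ_{t∈H} p t = 1, a deployed threshold h ∈ H with p h > 0, a ground-truth threshold f ≤ h, and let BR be the best-response function and R = inf{x : BR(x) ≥ h}. Then for every Borel probability measure D on ℝ, the learner's accuracy D({x : (BR(x) ≥ h) ↔ (x ≥ f)}) equals 1 − D((R, f)) if R < f, and equals 1 − D([f, R]) if R ≥ f. (Lemma 'learnersutility': the learner's utility of a released set is determined by R.) -/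
open MeasureTheory

/-- Lemma `learnersutility`: with `R = inf {x : BR(x) ≥ h}`, for every Borel probability
measure `D` on `ℝ`, the learner's accuracy `D {x : (BR(x) ≥ h) ↔ (x ≥ f)}` equals
`1 − D((R, f))` if `R < f`, and `1 − D([f, R])` if `R ≥ f`. -/
theorem stmt6 (H : Finset ℝ) (p : ℝ → ℝ) (hp : ∀ t ∈ H, 0 ≤ p t)
    (hsum : ∑ t ∈ H, p t = 1) (h : ℝ) (hh : h ∈ H) (hph : 0 < p h)
    (f : ℝ) (hf : f ≤ h)
    (BR : ℝ → ℝ) (hBR : ∀ x : ℝ, IsLeastMax H p x (BR x))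
    (D : Measure ℝ) [IsProbabilityMeasure D] :
    (sInf {y : ℝ | h ≤ BR y} < f →
      D {x : ℝ | (h ≤ BR x) ↔ (f ≤ x)} =
        1 - D (Set.Ioo (sInf {y : ℝ | h ≤ BR y}) f)) ∧
    (f ≤ sInf {y : ℝ | h ≤ BR y} →
      D {x : ℝ | (h ≤ BR x) ↔ (f ≤ x)} =
        1 - D (Set.Icc f (sInf {y : ℝ | h ≤ BR y}))) := by
  classical
  set F : ℝ → ℝ := fun w => ∑ t ∈ H.filter (fun t => t ≤ w), p t with hFdef
  have hFmono : ∀ a b : ℝ, a ≤ b → F a ≤ F b := by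
    intro a b hab
    apply Finset.sum_le_sum_of_subset_of_nonneg
    · intro t ht
      simp only [Finset.mem_filter] at *
      exact ⟨ht.1, ht.2.trans hab⟩
    · intro t ht _
      exact hp t (Finset.mem_filter.mp ht).1
  have hF0 : ∀ w, 0 ≤ F w := fun w =>
    Finset.sum_nonneg fun t ht => hp t (Finset.mem_filter.mp ht).1
  have hF1 : ∀ w, F w ≤ 1 := by
    intro w
    rw [← hsum]
    exact Finset.sum_le_sum_of_subset_of_nonneg (Finset.filter_subset _ _)
      (fun t ht _ => hp t ht)
  have hjump : ∀ w, w < h → F w + p h ≤ F h := by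
    intro w hw
    have hnot : h ∉ H.filter (fun t => t ≤ w) := by
      simp only [Finset.mem_filter]
      rintro ⟨-, hle⟩
      exact absurd hle (not_le.mpr hw)
    have hsub : insert h (H.filter (fun t => t ≤ w)) ⊆ H.filter (fun t => t ≤ h) := by
      intro t ht
      rcases Finset.mem_insert.mp ht with rfl | ht
      · exact Finset.mem_filter.mpr ⟨hh, le_refl _⟩
      · rcases Finset.mem_filter.mp ht with ⟨h1, h2⟩
        exact Finset.mem_filter.mpr ⟨h1, h2.trans hw.le⟩
    calc F w + p h = ∑ t ∈ insert h (H.filter (fun t => t ≤ w)), p t := by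
          rw [Finset.sum_insert hnot]; ring
      _ ≤ F h := Finset.sum_le_sum_of_subset_of_nonneg hsub
          (fun t ht _ => hp t (Finset.mem_filter.mp ht).1)
  have hu : ∀ x w : ℝ, x ≤ w → stratUtil H p x w = F w - (w - x) := by
    intro x w hxw
    unfold stratUtil
    rw [abs_of_nonneg (by linarith)]
  have hBRself : ∀ x, x ≤ BR x := fun x => (hBR x).1
  set S : Set ℝ := {y : ℝ | h ≤ BR y} with hSdef
  have hmemS : ∀ x, x ∈ S ↔ h ≤ BR x := fun x => Iff.rfl
  have hSup : ∀ x y, x ∈ S → x ≤ y → y ∈ S := by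
    intro x y hx hxy
    rw [hmemS] at *
    by_cases hyh : h ≤ y
    · exact hyh.trans (hBRself y)
    push_neg at hyh
    have h1 : y ≤ BR x := (hyh.trans_le hx).le
    have h2 : x ≤ BR y := hxy.trans (hBRself y)
    have e1 : stratUtil H p y (BR x) ≤ stratUtil H p y (BR y) := (hBR y).2.1 _ h1
    have e2 : stratUtil H p x (BR y) ≤ stratUtil H p x (BR x) := (hBR x).2.1 _ h2
    rw [hu y (BR x) h1, hu y (BR y) (hBRself y)] at e1
    rw [hu x (BR y) h2, hu x (BR x) (hBRself x)] at e2
    have e2' : stratUtil H p x (BR y) = stratUtil H p x (BR x) := by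
      rw [hu x (BR y) h2, hu x (BR x) (hBRself x)]
      linarith
    exact hx.trans ((hBR x).2.2 (BR y) h2 e2')
  have hhS : h ∈ S := hBRself h
  have hSbdd : BddBelow S := by
    refine ⟨h - 1, fun x hx => ?_⟩
    rw [hmemS] at hx
    have h1 : stratUtil H p x x ≤ stratUtil H p x (BR x) := (hBR x).2.1 x le_rfl
    rw [hu x x le_rfl, hu x (BR x) (hBRself x)] at h1
    have := hF0 x
    have := hF1 (BR x)
    linarith
  set R := sInf S with hRdef
  have hRle : R ≤ h := csInf_le hSbdd hhS
  have hgtS : ∀ x, R < x → x ∈ S := by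
    intro x hx
    rcases exists_lt_of_csInf_lt ⟨h, hhS⟩ hx with ⟨s, hs, hsx⟩
    exact hSup s x hs hsx.le
  have hltS : ∀ x, x < R → x ∉ S := fun x hx hmem =>
    absurd (csInf_le hSbdd hmem) (not_le.mpr hx)
  have hRnotS : R ∉ S := by
    intro hc
    have hBRR : h ≤ BR R := hc
    by_cases hRB : R < BR R
    · have hne : stratUtil H p R R < stratUtil H p R (BR R) := by
        rcases lt_or_eq_of_le ((hBR R).2.1 R le_rfl) with h' | h'
        · exact h'
        · exact absurd ((hBR R).2.2 R le_rfl h') (not_le.mpr hRB)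
      rw [hu R R le_rfl, hu R (BR R) (hBRself R)] at hne
      set δ := (F (BR R) - (BR R - R) - F R) / 2 with hδdef
      have hδpos : 0 < δ := by rw [hδdef]; linarith
      set x := R - δ with hxdef
      have hxR : x < R := by rw [hxdef]; linarith
      have hxB : x ≤ BR R := by linarith
      have h1 : stratUtil H p x (BR R) ≤ stratUtil H p x (BR x) := (hBR x).2.1 _ hxB
      rw [hu x (BR R) hxB, hu x (BR x) (hBRself x)] at h1
      have hRBRx : R ≤ BR x := by
        by_contra hcon
        push_neg at hcon
        have hmw : F (BR x) ≤ F R := hFmono _ _ hcon.le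
        have hw1 : x ≤ BR x := hBRself x
        rw [hxdef] at h1 hw1
        linarith
      have h2 : stratUtil H p R (BR x) ≤ stratUtil H p R (BR R) := (hBR R).2.1 _ hRBRx
      rw [hu R (BR x) hRBRx, hu R (BR R) (hBRself R)] at h2
      have heq : stratUtil H p R (BR x) = stratUtil H p R (BR R) := by
        rw [hu R (BR x) hRBRx, hu R (BR R) (hBRself R)]
        linarith
      have hxS : x ∈ S := by
        rw [hmemS]
        exact hBRR.trans ((hBR R).2.2 (BR x) hRBRx heq)
      exact absurd (csInf_le hSbdd hxS) (not_le.mpr hxR)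
    · push_neg at hRB
      have hBReq : BR R = R := le_antisymm hRB (hBRself R)
      have hRh : R = h := le_antisymm hRle (by rw [← hBReq]; exact hBRR)
      set δ := p h / 2 with hδdef
      have hδpos : 0 < δ := by rw [hδdef]; linarith
      set x := h - δ with hxdef
      have hxh : x < h := by rw [hxdef]; linarith
      have h1 : stratUtil H p x h ≤ stratUtil H p x (BR x) := (hBR x).2.1 h hxh.le
      rw [hu x h hxh.le, hu x (BR x) (hBRself x)] at h1
      have hBRxh : h ≤ BR x := by
        by_contra hcon
        push_neg at hcon
        have hmw := hjump (BR x) hcon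
        have hw1 : x ≤ BR x := hBRself x
        rw [hxdef] at h1 hw1
        rw [hδdef] at *
        linarith
      have hxS : x ∈ S := hBRxh
      have := csInf_le hSbdd hxS
      rw [← hRh] at hxh
      exact absurd this (not_le.mpr hxh)
  constructor
  · intro hRf
    have hset : {x : ℝ | (h ≤ BR x) ↔ (f ≤ x)} = (Set.Ioo R f)ᶜ := by
      ext x
      simp only [Set.mem_setOf_eq, Set.mem_compl_iff, Set.mem_Ioo, not_and, not_lt]
      constructor
      · intro hiff hx
        exact hiff.mp (hgtS x hx)
      · intro himp
        constructor
        · intro hxS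
          have hRx : R ≤ x := csInf_le hSbdd hxS
          rcases hRx.lt_or_eq with h' | h'
          · exact himp h'
          · exact absurd (show (x : ℝ) ∈ S from hxS) (h' ▸ hRnotS)
        · intro hfx
          exact hgtS x (lt_of_lt_of_le hRf hfx)
    rw [hset, measure_compl measurableSet_Ioo (measure_ne_top D _), measure_univ]
  · intro hfR
    have hset : {x : ℝ | (h ≤ BR x) ↔ (f ≤ x)} = (Set.Icc f R)ᶜ := by
      ext x
      simp only [Set.mem_setOf_eq, Set.mem_compl_iff, Set.mem_Icc, not_and, not_le]
      constructor
      · intro hiff hfx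
        by_contra hcon
        push_neg at hcon
        have hxnS : x ∉ S := by
          rcases hcon.lt_or_eq with h' | h'
          · exact hltS x h'
          · exact h' ▸ hRnotS
        exact hxnS (hiff.mpr hfx)
      · intro himp
        constructor
        · intro hxS
          exact hfR.trans (csInf_le hSbdd hxS)
        · intro hfx
          exact hgtS x (himp hfx)
    rw [hset, measure_compl measurableSet_Icc (measure_ne_top D _), measure_univ]
end

section
/- In the one-dimensional strategic classification setting, fix a finite set H ⊆ ℝ of thresholds, nonnegative weights p with Σ_{t∈H} p t = 1, a deployed threshold h ∈ H with p h > 0, and let BR be the best-response function and R = inf{x : BR(x) ≥ h}. Suppose h_i ∈ H satisfies BR(h) = h_i. Then {x ∈ ℝ : BR(x) = h_i} = (R, h_i]; in particular R = inf{x : BR(x) = h_i}. (Lemma 'h_i'.) -/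
/-- Lemma `h_i`: with `R = inf {x : BR(x) ≥ h}`, if `BR(h) = h_i ∈ H`, then
`{x : BR(x) = h_i} = (R, h_i]`; in particular `R = inf {x : BR(x) = h_i}`. -/
theorem stmt7 (H : Finset ℝ) (p : ℝ → ℝ) (hp : ∀ t ∈ H, 0 ≤ p t)
    (hsum : ∑ t ∈ H, p t = 1) (h : ℝ) (hh : h ∈ H) (hph : 0 < p h)
    (BR : ℝ → ℝ) (hBR : ∀ x : ℝ, IsLeastMax H p x (BR x))
    (hi : ℝ) (hhi : hi ∈ H) (hBRh : BR h = hi) :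
    {x : ℝ | BR x = hi} = Set.Ioc (sInf {y : ℝ | h ≤ BR y}) hi ∧
    sInf {y : ℝ | h ≤ BR y} = sInf {x : ℝ | BR x = hi} := by
  classical
  set F : ℝ → ℝ := fun v => ∑ t ∈ H.filter (fun t => t ≤ v), p t with hFdef
  set φ : ℝ → ℝ := fun v => F v - v with hφdef
  have hsu : ∀ x w : ℝ, x ≤ w → stratUtil H p x w = φ w + x := by
    intro x w hxw
    simp only [stratUtil, hφdef, hFdef, abs_of_nonneg (sub_nonneg.mpr hxw)]
    ring
  have brA : ∀ x, x ≤ BR x := fun x => (hBR x).1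
  have brB : ∀ x w, x ≤ w → φ w ≤ φ (BR x) := by
    intro x w hxw
    have := (hBR x).2.1 w hxw
    rw [hsu x w hxw, hsu x (BR x) (brA x)] at this
    linarith
  have brC : ∀ x w, x ≤ w → φ w = φ (BR x) → BR x ≤ w := by
    intro x w hxw heq
    refine (hBR x).2.2 w hxw ?_
    rw [hsu x w hxw, hsu x (BR x) (brA x), heq]
  have brMono : ∀ x y, x ≤ y → y ≤ BR x → BR y = BR x := by
    intro x y hxy hyB
    have h1 : φ (BR x) ≤ φ (BR y) := brB y (BR x) hyB
    have h2 : φ (BR y) ≤ φ (BR x) := brB x (BR y) (hxy.trans (brA y))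
    have heq : φ (BR y) = φ (BR x) := le_antisymm h2 h1
    exact le_antisymm (brC y (BR x) hyB heq.symm) (brC x (BR y) (hxy.trans (brA y)) heq)
  have Fnonneg : ∀ v, 0 ≤ F v := by
    intro v
    exact Finset.sum_nonneg fun t ht => hp t (Finset.mem_filter.mp ht).1
  have Fle1 : ∀ v, F v ≤ 1 := by
    intro v
    rw [← hsum]
    exact Finset.sum_le_sum_of_subset_of_nonneg (Finset.filter_subset _ _)
      (fun t ht _ => hp t ht)
  have Fmono : ∀ v w, v ≤ w → F v ≤ F w := by
    intro v w hvw
    apply Finset.sum_le_sum_of_subset_of_nonneg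
    · intro t ht
      have := Finset.mem_filter.mp ht
      exact Finset.mem_filter.mpr ⟨this.1, this.2.trans hvw⟩
    · intro t ht _
      exact hp t (Finset.mem_filter.mp ht).1
  have Fgap : ∀ w, w < h → F w + p h ≤ F h := by
    intro w hw
    have hnot : h ∉ H.filter (fun t => t ≤ w) := by
      simp only [Finset.mem_filter, not_and]
      intro _
      exact not_le.mpr hw
    have hins : F w + p h = ∑ t ∈ insert h (H.filter (fun t => t ≤ w)), p t := by
      rw [Finset.sum_insert hnot]; ring
    rw [hins]
    apply Finset.sum_le_sum_of_subset_of_nonneg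
    · intro t ht
      rcases Finset.mem_insert.mp ht with rfl | ht'
      · exact Finset.mem_filter.mpr ⟨hh, le_refl _⟩
      · have := Finset.mem_filter.mp ht'
        exact Finset.mem_filter.mpr ⟨this.1, this.2.trans hw.le⟩
    · intro t ht _
      exact hp t (Finset.mem_filter.mp ht).1
  set S : Set ℝ := {y : ℝ | h ≤ BR y} with hSdef
  set R : ℝ := sInf S with hRdef
  have hhhi : h ≤ hi := hBRh ▸ brA h
  have hS_h : h ∈ S := by
    show h ≤ BR h
    rw [hBRh]; exact hhhi
  have hbdd : BddBelow S := by
    refine ⟨h - 1, ?_⟩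
    intro y hy
    have hy' : h ≤ BR y := hy
    have h1 : φ y ≤ φ (BR y) := brB y y le_rfl
    have h2 : F y - y ≤ F (BR y) - BR y := h1
    have h3 : 0 ≤ F y := Fnonneg y
    have h4 : F (BR y) ≤ 1 := Fle1 (BR y)
    linarith
  have hRh : R ≤ h := csInf_le hbdd hS_h
  -- Claim 2 : BR R < h
  have claim2 : BR R < h := by
    by_contra hcon
    push_neg at hcon
    have hBRR : BR R = hi := ((brMono R h hRh hcon).symm).trans hBRh
    have hφR : φ R ≤ φ hi := by
      have := brB R R le_rfl
      rwa [hBRR] at this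
    set ε : ℝ := if R < h then φ hi - φ R else p h with hεdef
    have hεpos : 0 < ε := by
      rw [hεdef]
      split_ifs with hRlt
      · rcases lt_or_eq_of_le hφR with hlt | heq
        · linarith
        · exfalso
          have := brC R R le_rfl (by rw [hBRR]; exact heq)
          rw [hBRR] at this
          linarith
      · exact hph
    have hbound : ∀ w, w < R → φ w ≤ φ hi - ε + (R - w) := by
      intro w hw
      rw [hεdef]
      split_ifs with hRlt
      · have : F w ≤ F R := Fmono w R hw.le
        simp only [hφdef]
        linarith
      · have hReq : R = h := le_antisymm hRh (not_lt.mp hRlt)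
        have h5 : F w + p h ≤ F R := by rw [hReq]; exact Fgap w (hReq ▸ hw)
        have h6 : F R - R ≤ F hi - hi := hφR
        simp only [hφdef]
        linarith
    set y : ℝ := R - ε / 2 with hydef
    have hylt : y < R := by rw [hydef]; linarith
    have hbig : ∀ w, y ≤ w → w < R → φ w < φ hi := by
      intro w hyw hwR
      have := hbound w hwR
      have : R - w ≤ ε / 2 := by rw [hydef] at hyw; linarith
      have := hbound w hwR
      linarith
    have hall : ∀ w, y ≤ w → φ w ≤ φ hi := by
      intro w hyw
      by_cases hwR : w < R
      · exact (hbig w hyw hwR).le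
      · push_neg at hwR
        have := brB R w hwR
        rwa [hBRR] at this
    have hBRy_eq : φ (BR y) = φ hi := by
      refine le_antisymm (hall _ (brA y)) ?_
      have hyhi : y ≤ hi := by linarith
      exact brB y hi hyhi
    have hBRyR : R ≤ BR y := by
      by_contra hc
      push_neg at hc
      exact absurd hBRy_eq (ne_of_lt (hbig _ (brA y) hc))
    have hhiBRy : hi ≤ BR y := by
      have := brC R (BR y) hBRyR (by rw [hBRR]; exact hBRy_eq)
      rwa [hBRR] at this
    have hyS : y ∈ S := le_trans hhhi hhiBRy
    have := csInf_le hbdd hyS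
    rw [← hRdef] at this
    linarith
  -- Claim 1 : membership
  have hmem : ∀ x, R < x → x ≤ hi → BR x = hi := by
    intro x hRx hxhi
    by_cases hxh : x ≤ h
    · obtain ⟨y, hyS, hyx⟩ := exists_lt_of_csInf_lt ⟨h, hS_h⟩ hRx
      have hyS' : h ≤ BR y := hyS
      have e1 : BR x = BR y := brMono y x hyx.le (hxh.trans hyS')
      have e2 : BR h = BR y := brMono y h (hyx.le.trans hxh) hyS'
      rw [e1, ← e2, hBRh]
    · push_neg at hxh
      rw [brMono h x hxh.le (hBRh ▸ hxhi), hBRh]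
  have hseteq : {x : ℝ | BR x = hi} = Set.Ioc R hi := by
    ext x
    simp only [Set.mem_setOf_eq, Set.mem_Ioc]
    constructor
    · intro hx
      have hxS : x ∈ S := by show h ≤ BR x; rw [hx]; exact hhhi
      have hRx : R ≤ x := csInf_le hbdd hxS
      refine ⟨lt_of_le_of_ne hRx ?_, hx ▸ brA x⟩
      intro heq
      rw [← heq] at hx
      have : h ≤ BR R := by rw [hx]; exact hhhi
      exact absurd this (not_le.mpr claim2)
    · intro hx
      exact hmem x hx.1 hx.2
  refine ⟨hseteq, ?_⟩
  have hhIoc : h ∈ Set.Ioc R hi := by rw [← hseteq]; exact hBRh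
  have hRhi : R < hi := lt_of_lt_of_le hhIoc.1 hhhi
  rw [hseteq, csInf_Ioc hRhi]
end

section
/- In the one-dimensional strategic classification setting with a uniform posterior, fix a finite set H ⊆ ℝ of thresholds with |H| = ℓ ≥ 1 and weights p t = 1/ℓ for every t ∈ H, a deployed threshold h ∈ H, and let BR be the best-response function and R = inf{x : BR(x) ≥ h}. Suppose h_i ∈ H satisfies BR(h) = h_i. Then R = h_i − j/ℓ, where j = |{t ∈ H : R < t ≤ h_i}|. (Lemma 'R_H': under a uniform posterior, R takes one of only polynomially many possible values.) -/
/-- Lemma `R_H`: under a uniform posterior over `ℓ = |H|` thresholds, if `BR(h) = h_i ∈ H`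
and `R = inf {x : BR(x) ≥ h}`, then `R = h_i − j/ℓ` where
`j = |{t ∈ H : R < t ≤ h_i}|`. -/
theorem stmt8 (H : Finset ℝ) (ℓ : ℕ) (hl : 1 ≤ ℓ) (hcard : H.card = ℓ)
    (p : ℝ → ℝ) (hp : ∀ t ∈ H, p t = 1 / (ℓ : ℝ))
    (h : ℝ) (hh : h ∈ H)
    (BR : ℝ → ℝ) (hBR : ∀ x : ℝ, IsLeastMax H p x (BR x))
    (hi : ℝ) (hhi : hi ∈ H) (hBRh : BR h = hi) :
    sInf {y : ℝ | h ≤ BR y} =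
      hi - ((H.filter (fun t => sInf {y : ℝ | h ≤ BR y} < t ∧ t ≤ hi)).card : ℝ) / (ℓ : ℝ) := by
  classical
  set S : Set ℝ := {y : ℝ | h ≤ BR y} with hS
  set R : ℝ := sInf S with hRdef
  set G : ℝ → ℝ := fun z => (∑ t ∈ H.filter (fun t => t ≤ z), p t) - z with hGdef
  clear_value S R G
  have hpnn : ∀ t ∈ H, 0 ≤ p t := fun t ht => by rw [hp t ht]; positivity
  have hu : ∀ x z : ℝ, x ≤ z → stratUtil H p x z = G z + x := by
    intro x z hxz
    simp only [stratUtil, hGdef, abs_of_nonneg (sub_nonneg.2 hxz)]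
    ring
  have hBR1 : ∀ x, x ≤ BR x := fun x => (hBR x).1
  have hBR2 : ∀ x z, x ≤ z → G z ≤ G (BR x) := by
    intro x z hxz
    have h1 := (hBR x).2.1 z hxz
    rw [hu x z hxz, hu x (BR x) (hBR1 x)] at h1
    linarith
  have hBR3 : ∀ x z, x ≤ z → G z = G (BR x) → BR x ≤ z := by
    intro x z hxz hEq
    exact (hBR x).2.2 z hxz (by rw [hu x z hxz, hu x (BR x) (hBR1 x), hEq])
  have hhhi : h ≤ hi := by rw [← hBRh]; exact hBR1 h
  have hGhi : ∀ z, h ≤ z → G z ≤ G hi := by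
    intro z hz
    have h1 := hBR2 h z hz
    rwa [hBRh] at h1
  have hSmem : ∀ y : ℝ, y ∈ S ↔ (h ≤ y ∨ ∀ z, y ≤ z → z < h → G z < G hi) := by
    intro y
    simp only [hS, Set.mem_setOf_eq]
    constructor
    · intro hy
      by_cases hyh : h ≤ y
      · exact Or.inl hyh
      · right
        intro z hyz hzh
        have h1 : G z ≤ G (BR y) := hBR2 y z hyz
        have h2 : G (BR y) ≤ G hi := hGhi _ hy
        rcases lt_or_eq_of_le (h1.trans h2) with h3 | h3
        · exact h3
        · exfalso
          have h4 : G z = G (BR y) := le_antisymm h1 (by rw [h3]; exact h2)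
          have h5 := hBR3 y z hyz h4
          linarith
    · intro hy
      by_cases hyh : h ≤ y
      · exact hyh.trans (hBR1 y)
      · rcases hy with hy | hy
        · exact absurd hy hyh
        · by_contra hc
          push_neg at hc
          have h1 : G hi ≤ G (BR y) := hBR2 y hi ((le_of_not_ge hyh).trans hhhi)
          have h2 : G (BR y) < G hi := hy (BR y) (hBR1 y) hc
          linarith
  have hhS : h ∈ S := by
    simp only [hS, Set.mem_setOf_eq]
    rw [hBRh]; exact hhhi
  have hne : S.Nonempty := ⟨h, hhS⟩
  have hHne : H.Nonempty := Finset.card_pos.mp (by rw [hcard]; exact hl)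
  have hbdd : BddBelow S := by
    refine ⟨min h (min (H.min' hHne) (-(G hi))) - 1, fun y hy => ?_⟩
    by_contra hcon
    push_neg at hcon
    have hyh : y < h := by
      have := min_le_left h (min (H.min' hHne) (-(G hi))); linarith
    have hfilt : H.filter (fun t => t ≤ y) = ∅ := by
      apply Finset.filter_false_of_mem
      intro t ht
      have h1 := H.min'_le t ht
      have h2 := min_le_right h (min (H.min' hHne) (-(G hi)))
      have h3 := min_le_left (H.min' hHne) (-(G hi))
      push_neg
      linarith
    have hGy : G y = -y := by
      simp only [hGdef]
      rw [hfilt]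
      simp
    rcases (hSmem y).mp hy with h1 | h1
    · linarith
    · have h2 := h1 y le_rfl hyh
      have h3 := min_le_right h (min (H.min' hHne) (-(G hi)))
      have h4 := min_le_right (H.min' hHne) (-(G hi))
      rw [hGy] at h2
      linarith
  have hRh : R ≤ h := by rw [hRdef]; exact csInf_le hbdd hhS
  have hstar : ∀ z, R < z → z < h → G z < G hi := by
    intro z h1 h2
    rw [hRdef] at h1
    obtain ⟨y, hyS, hyz⟩ := exists_lt_of_csInf_lt hne h1
    rcases (hSmem y).mp hyS with h3 | h3
    · linarith
    · exact h3 z hyz.le h2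
  have hFmono : ∀ a b : ℝ, a ≤ b →
      (∑ t ∈ H.filter (fun t => t ≤ a), p t) ≤ ∑ t ∈ H.filter (fun t => t ≤ b), p t := by
    intro a b hab
    apply Finset.sum_le_sum_of_subset_of_nonneg
    · intro t ht
      rw [Finset.mem_filter] at *
      exact ⟨ht.1, ht.2.trans hab⟩
    · intro t ht _
      exact hpnn t (Finset.mem_filter.mp ht).1
  have hGsub : ∀ a b : ℝ, a ≤ b → G a ≤ G b + (b - a) := by
    intro a b hab
    have := hFmono a b hab
    simp only [hGdef]
    linarith
  have hGR1 : G hi ≤ G R := by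
    by_contra hcon
    push_neg at hcon
    have hyS : R - (G hi - G R) / 2 ∈ S := by
      rw [hSmem]
      right
      intro z hz1 hz2
      rcases lt_trichotomy z R with hv | hv | hv
      · have := hGsub z R hv.le
        linarith
      · rw [hv]; exact hcon
      · exact hstar z hv hz2
    have h9 := csInf_le hbdd hyS
    rw [← hRdef] at h9
    linarith
  have hGR2 : G R ≤ G hi := by
    rcases eq_or_lt_of_le hRh with heq | hlt
    · rw [heq]; exact hGhi h le_rfl
    · by_contra hcon
      push_neg at hcon
      obtain ⟨ε, hε, hεt⟩ : ∃ ε : ℝ, 0 < ε ∧ ∀ t ∈ H, R < t → R + ε ≤ t := by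
        by_cases hT : (H.filter (fun t => R < t)).Nonempty
        · refine ⟨(H.filter (fun t => R < t)).min' hT - R, ?_, ?_⟩
          · have h1 := (H.filter (fun t => R < t)).min'_mem hT
            rw [Finset.mem_filter] at h1
            linarith [h1.2]
          · intro t ht hrt
            have := (H.filter (fun t => R < t)).min'_le t (Finset.mem_filter.mpr ⟨ht, hrt⟩)
            linarith
        · exact ⟨1, one_pos, fun t ht hrt => absurd ⟨t, Finset.mem_filter.mpr ⟨ht, hrt⟩⟩ hT⟩
      set z := R + min ε (min (h - R) (G R - G hi)) / 2 with hzdef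
      clear_value z
      have hmin1 : min ε (min (h - R) (G R - G hi)) ≤ ε := min_le_left _ _
      have hmin2 : min ε (min (h - R) (G R - G hi)) ≤ h - R :=
        (min_le_right _ _).trans (min_le_left _ _)
      have hmin3 : min ε (min (h - R) (G R - G hi)) ≤ G R - G hi :=
        (min_le_right _ _).trans (min_le_right _ _)
      have hminpos : 0 < min ε (min (h - R) (G R - G hi)) :=
        lt_min hε (lt_min (by linarith) (by linarith))
      have hz1 : R < z := by rw [hzdef]; linarith
      have hz2 : z < h := by rw [hzdef]; linarith
      have hFeq : H.filter (fun t => t ≤ z) = H.filter (fun t => t ≤ R) := by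
        ext t
        simp only [Finset.mem_filter]
        constructor
        · rintro ⟨ht, htz⟩
          refine ⟨ht, ?_⟩
          by_contra hgt
          push_neg at hgt
          have h9 := hεt t ht hgt
          rw [hzdef] at htz
          linarith
        · rintro ⟨ht, htR⟩
          exact ⟨ht, htR.trans hz1.le⟩
      have hGz : G z = G R - (z - R) := by
        simp only [hGdef]
        rw [hFeq]
        ring
      have h1 : G z < G hi := hstar z hz1 hz2
      rw [hGz, hzdef] at h1
      linarith
  have hGReq : G R = G hi := le_antisymm hGR2 hGR1
  have hRhi : R ≤ hi := hRh.trans hhhi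
  have hsplit : H.filter (fun t => t ≤ hi) =
      H.filter (fun t => t ≤ R) ∪ H.filter (fun t => R < t ∧ t ≤ hi) := by
    ext t
    simp only [Finset.mem_filter, Finset.mem_union]
    constructor
    · rintro ⟨ht, hthi⟩
      rcases le_or_gt t R with h1 | h1
      · exact Or.inl ⟨ht, h1⟩
      · exact Or.inr ⟨ht, h1, hthi⟩
    · rintro (⟨ht, h1⟩ | ⟨ht, h1, h2⟩)
      · exact ⟨ht, h1.trans hRhi⟩
      · exact ⟨ht, h2⟩
  have hdisj : Disjoint (H.filter (fun t => t ≤ R)) (H.filter (fun t => R < t ∧ t ≤ hi)) := by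
    rw [Finset.disjoint_left]
    intro t h1 h2
    rw [Finset.mem_filter] at h1 h2
    linarith [h1.2, h2.2.1]
  have hsum : (∑ t ∈ H.filter (fun t => t ≤ hi), p t) =
      (∑ t ∈ H.filter (fun t => t ≤ R), p t) +
        ((H.filter (fun t => R < t ∧ t ≤ hi)).card : ℝ) / (ℓ : ℝ) := by
    rw [hsplit, Finset.sum_union hdisj]
    congr 1
    rw [Finset.sum_congr rfl (fun t ht => hp t (Finset.mem_filter.mp ht).1)]
    rw [Finset.sum_const, nsmul_eq_mul]
    ring
  simp only [hGdef] at hGReq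
  linarith [hsum, hGReq]
end

section
/- Consider the continuous uniform posterior over thresholds in an interval [c, d] with c < d and d − c ≥ 1, and the induced utility u x x' = F(x') − |x' − x| where F(z) = min(max((z − c)/(d − c), 0), 1). Then for every agent x ∈ ℝ and every x' ∈ ℝ, u x x' ≤ u x x; consequently x itself is a cost-minimal maximizer of u x, and under lowest-cost tie-breaking no agent manipulates. (Part of the proof of Theorem 'unif-cont': when the posterior interval has length at least 1, no agent manipulates.) -/
/-- Under the continuous uniform posterior on `[c, d]`, the probability that the point
`z` passes the unknown threshold. -/
noncomputable def passProb (c d z : ℝ) : ℝ := min (max ((z - c) / (d - c)) 0) 1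

/-- The utility of agent `x` from moving to `x'` under the continuous uniform posterior
on `[c, d]`. -/
noncomputable def unifUtil (c d x x' : ℝ) : ℝ := passProb c d x' - |x' - x|

/-- Part of the proof of Theorem `unif-cont`: if the posterior interval `[c, d]` has
length at least 1, then for every agent `x` and every `x'`, `u x x' ≤ u x x`; staying
put is a cost-minimal maximizer and no agent manipulates. -/
theorem stmt9 (c d : ℝ) (hcd : c < d) (hlen : 1 ≤ d - c) :
    ∀ x x' : ℝ, unifUtil c d x x' ≤ unifUtil c d x x := by
  intro x x'
  have hd : (0:ℝ) < d - c := by linarith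
  simp only [unifUtil, passProb, sub_self, abs_zero, sub_zero]
  have key : min (max ((x' - c) / (d - c)) 0) 1 - min (max ((x - c) / (d - c)) 0) 1
      ≤ |x' - x| := by
    have h1 : |(x' - c) / (d - c) - (x - c) / (d - c)| ≤ |x' - x| := by
      rw [div_sub_div_same, abs_div, abs_of_pos hd]
      rw [show x' - c - (x - c) = x' - x by ring]
      have := abs_nonneg (x' - x)
      calc |x' - x| / (d - c) ≤ |x' - x| / 1 := by
            apply div_le_div_of_nonneg_left <;> linarith
        _ = |x' - x| := div_one _
    have h2 : |min (max ((x' - c) / (d - c)) 0) 1 - min (max ((x - c) / (d - c)) 0) 1|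
        ≤ |(x' - c) / (d - c) - (x - c) / (d - c)| := by
      refine (abs_min_sub_min_le_max _ _ _ _).trans ?_
      refine max_le ?_ ?_
      · exact (abs_max_sub_max_le_max _ _ _ _).trans (max_le le_rfl (by simp))
      · simp
    linarith [le_abs_self (min (max ((x' - c) / (d - c)) 0) 1 - min (max ((x - c) / (d - c)) 0) 1), h2.trans h1]
  linarith
end

section
/- Consider the continuous uniform posterior over thresholds in an interval [c, d] with c < d and d − c < 1, and the induced utility u x x' = F(x') − |x' − x| where F(z) = min(max((z − c)/(d − c), 0), 1). Then: (i) if d − 1 < x < d, then d is the unique maximizer of u x on [x, ∞), i.e., u x x' < u x d for every x' ≥ x with x' ≠ d; and (ii) if x ≤ d − 1 or x ≥ d, then u x x' ≤ u x x for every x' ≥ x. (Part of the proof of Theorem 'unif-cont': when the posterior interval has length less than 1, exactly the agents in (d−1, d) manipulate, and they move to d.) -/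
lemma passProb_of_le {c d z : ℝ} (hcd : c < d) (h : z ≤ c) : passProb c d z = 0 := by
  unfold passProb
  have h1 : (z - c) / (d - c) ≤ 0 :=
    div_nonpos_of_nonpos_of_nonneg (by linarith) (by linarith)
  rw [max_eq_right h1, min_eq_left (by norm_num)]

lemma passProb_of_ge {c d z : ℝ} (hcd : c < d) (h : d ≤ z) : passProb c d z = 1 := by
  unfold passProb
  have h1 : (1:ℝ) ≤ (z - c) / (d - c) := by
    rw [le_div_iff₀ (by linarith)]; linarith
  rw [max_eq_left (by linarith), min_eq_right h1]

lemma passProb_mid {c d z : ℝ} (hcd : c < d) (h1 : c ≤ z) (h2 : z ≤ d) :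
    passProb c d z = (z - c) / (d - c) := by
  unfold passProb
  have hp : (0:ℝ) < d - c := by linarith
  have ha : (0:ℝ) ≤ (z - c) / (d - c) := div_nonneg (by linarith) hp.le
  have hb : (z - c) / (d - c) ≤ 1 := by rw [div_le_iff₀ hp]; linarith
  rw [max_eq_left ha, min_eq_left hb]

/-- Part of the proof of Theorem `unif-cont`: if the posterior interval `[c, d]` has
length less than 1, then (i) every agent `x ∈ (d−1, d)` has `d` as unique maximizer of
its utility on `[x, ∞)`, and (ii) every agent with `x ≤ d−1` or `x ≥ d` prefers staying
put to any move `x' ≥ x`. -/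
theorem stmt10 (c d : ℝ) (hcd : c < d) (hlen : d - c < 1) :
    (∀ x : ℝ, d - 1 < x → x < d →
      ∀ x' : ℝ, x ≤ x' → x' ≠ d → unifUtil c d x x' < unifUtil c d x d) ∧
    (∀ x : ℝ, (x ≤ d - 1 ∨ d ≤ x) →
      ∀ x' : ℝ, x ≤ x' → unifUtil c d x x' ≤ unifUtil c d x x) := by
  have hp : (0:ℝ) < d - c := by linarith
  constructor
  · intro x hx1 hx2 x' hxx' hne
    have hud : unifUtil c d x d = 1 - (d - x) := by
      unfold unifUtil
      rw [passProb_of_ge hcd le_rfl, abs_of_nonneg (by linarith)]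
    have habs : |x' - x| = x' - x := abs_of_nonneg (by linarith)
    rcases lt_or_gt_of_ne hne with h | h
    · -- x' < d
      rcases le_or_gt x' c with h2 | h2
      · have : unifUtil c d x x' = 0 - (x' - x) := by
          unfold unifUtil; rw [passProb_of_le hcd h2, habs]
        rw [this, hud]; linarith
      · have : unifUtil c d x x' = (x' - c) / (d - c) - (x' - x) := by
          unfold unifUtil; rw [passProb_mid hcd h2.le h.le, habs]
        rw [this, hud]
        have hkey : (x' - c) / (d - c) < 1 - (d - x') := by
          rw [div_lt_iff₀ hp]; nlinarith
        linarith
    · -- x' > d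
      have : unifUtil c d x x' = 1 - (x' - x) := by
        unfold unifUtil; rw [passProb_of_ge hcd h.le, habs]
      rw [this, hud]; linarith
  · intro x hx x' hxx'
    have habs : |x' - x| = x' - x := abs_of_nonneg (by linarith)
    rcases hx with hx | hx
    · -- x ≤ d - 1, so x < c since d - c < 1
      have hxc : x ≤ c := by linarith
      have hux : unifUtil c d x x = 0 := by
        unfold unifUtil
        rw [passProb_of_le hcd hxc, sub_self, abs_zero]; ring
      rw [hux]
      rcases le_or_gt x' c with h2 | h2
      · unfold unifUtil; rw [passProb_of_le hcd h2, habs]; linarith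
      · rcases le_or_gt x' d with h3 | h3
        · unfold unifUtil
          rw [passProb_mid hcd h2.le h3, habs]
          have : (x' - c) / (d - c) ≤ x' - x := by
            rw [div_le_iff₀ hp]; nlinarith
          linarith
        · unfold unifUtil
          rw [passProb_of_ge hcd h3.le, habs]; linarith
    · -- d ≤ x
      have hux : unifUtil c d x x = 1 := by
        unfold unifUtil
        rw [passProb_of_ge hcd hx, sub_self, abs_zero, sub_zero]
      rw [hux]
      unfold unifUtil
      have h1 : passProb c d x' ≤ 1 := min_le_right _ _
      have h2 : (0:ℝ) ≤ |x' - x| := abs_nonneg _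
      linarith
end

section
/- Let c < d with d − c < 1, let h ∈ [c, d] be the deployed threshold, and let f ≤ h be the ground-truth threshold. Define the best-response map BR(x) = d if d − 1 < x < d and BR(x) = x otherwise (this is the agents' best response under the uniform posterior on [c, d]). Then for every Borel probability measure D on ℝ, the learner's accuracy D({x : (BR(x) ≥ h) ↔ (x ≥ f)}) equals 1 − D((d − 1, f)) if d − 1 < f, and equals 1 − D([f, d − 1]) if d − 1 ≥ f. (Utility formula in Theorem 'unif-cont' for releasing the interval [c, d].) -/
open MeasureTheory

/-- Utility formula in Theorem `unif-cont`: with posterior interval `[c, d]` of length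
less than 1, deployed threshold `h ∈ [c, d]`, ground truth `f ≤ h`, and the agents'
best-response map `BR(x) = d` for `x ∈ (d−1, d)` and `BR(x) = x` otherwise, the
learner's accuracy under any Borel probability measure `D` equals `1 − D((d−1, f))` if
`d − 1 < f`, and `1 − D([f, d−1])` if `d − 1 ≥ f`. -/
theorem stmt11 (c d h f : ℝ) (hcd : c < d) (hlen : d - c < 1)
    (hh : h ∈ Set.Icc c d) (hf : f ≤ h)
    (BR : ℝ → ℝ) (hBR : ∀ x : ℝ, BR x = if d - 1 < x ∧ x < d then d else x)
    (D : Measure ℝ) [IsProbabilityMeasure D] :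
    (d - 1 < f →
      D {x : ℝ | (h ≤ BR x) ↔ (f ≤ x)} = 1 - D (Set.Ioo (d - 1) f)) ∧
    (f ≤ d - 1 →
      D {x : ℝ | (h ≤ BR x) ↔ (f ≤ x)} = 1 - D (Set.Icc f (d - 1))) := by
  obtain ⟨hch, hhd⟩ := hh
  have hfd : f ≤ d := hf.trans hhd
  have hdc : d - 1 < c := by linarith
  constructor
  · intro h1
    have hset : {x : ℝ | (h ≤ BR x) ↔ (f ≤ x)} = (Set.Ioo (d - 1) f)ᶜ := by
      ext x
      simp only [Set.mem_setOf_eq, Set.mem_compl_iff, Set.mem_Ioo, not_and, not_lt]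
      rw [hBR x]
      by_cases hx : d - 1 < x ∧ x < d
      · rw [if_pos hx]
        constructor
        · intro hiff hx1
          by_contra hc
          push_neg at hc
          exact absurd (hiff.mp hhd) (by linarith)
        · intro himp
          constructor
          · intro _; by_contra hc; push_neg at hc; linarith [himp hx.1]
          · intro _; exact hhd
      · rw [if_neg hx]
        push_neg at hx
        rcases le_or_gt x (d - 1) with hle | hgt
        · constructor
          · intro _ _; linarith
          · intro _; constructor <;> intro <;> linarith
        · have hxd : d ≤ x := hx hgt
          constructor
          · intro _ _; linarith
          · intro _; constructor <;> intro _ <;> linarith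
    rw [hset, prob_compl_eq_one_sub measurableSet_Ioo]
  · intro h2
    have hset : {x : ℝ | (h ≤ BR x) ↔ (f ≤ x)} = (Set.Icc f (d - 1))ᶜ := by
      ext x
      simp only [Set.mem_setOf_eq, Set.mem_compl_iff, Set.mem_Icc, not_and, not_le]
      rw [hBR x]
      by_cases hx : d - 1 < x ∧ x < d
      · rw [if_pos hx]
        constructor
        · intro _ _; linarith [hx.1]
        · intro _
          constructor
          · intro _; linarith [hx.1]
          · intro _; exact hhd
      · rw [if_neg hx]
        push_neg at hx
        rcases le_or_gt x (d - 1) with hle | hgt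
        · constructor
          · intro hiff hfx
            by_contra hc
            push_neg at hc
            linarith [hiff.mpr hfx]
          · intro himp
            constructor
            · intro hhx; linarith
            · intro hfx; linarith [himp hfx]
        · have hxd : d ≤ x := hx hgt
          constructor
          · intro _ _; linarith
          · intro _; constructor <;> intro _ <;> linarith
    rw [hset, prob_compl_eq_one_sub measurableSet_Icc]
end

section
/- In the one-dimensional strategic classification setting with releases, fix a finite prior support N ⊆ ℝ with nonnegative weights p summing to 1, a ground-truth threshold f and a deployed threshold h ∈ N with f ≤ h and p h > 0. Then for every x < f: if BR_N(x) ≥ h (the agent passes h after best responding to the full prior, i.e., releasing all of N), then BR_{{h}}(x) ≥ h (the agent also passes h after best responding to the full-information release {h}). Consequently {x : x < f and BR_N(x) ≥ h} ⊆ {x : x < f and BR_{{h}}(x) ≥ h}, so for every data distribution the false positive rate under no-information release is at most the false positive rate under full-information release. (Theorem 'fpr-fnr', part 1: FPR(ℋ) ≤ FPR({h}).) -/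
/-- The posterior utility of agent `x` from moving to `x'` when the subset `H` of the
prior support is released: the posterior probability (prior `p` restricted to `H` and
renormalized) of passing minus the manipulation cost. -/
noncomputable def postUtil (H : Finset ℝ) (p : ℝ → ℝ) (x x' : ℝ) : ℝ :=
  (∑ t ∈ H.filter (fun t => t ≤ x'), p t) / (∑ t ∈ H, p t) - |x' - x|

/-- `z` is the least maximizer on `[x, ∞)` of the posterior utility of agent `x` under
release `H`: the best response `BR_H(x)`. -/
def IsBestResponse (H : Finset ℝ) (p : ℝ → ℝ) (x z : ℝ) : Prop :=
  x ≤ z ∧ (∀ w : ℝ, x ≤ w → postUtil H p x w ≤ postUtil H p x z) ∧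
    (∀ w : ℝ, x ≤ w → postUtil H p x w = postUtil H p x z → z ≤ w)

/-- Theorem `fpr-fnr`, part 1 (`FPR(ℋ) ≤ FPR({h})`): every agent `x < f` that passes the
deployed threshold `h` after best responding to no-information release (release of the
whole support `N`) also passes `h` after best responding to full-information release
`{h}`; hence the false positives under no-information release are a subset of those
under full-information release. -/
theorem stmt12 (N : Finset ℝ) (p : ℝ → ℝ) (hp : ∀ t ∈ N, 0 ≤ p t)
    (hsum : ∑ t ∈ N, p t = 1) (f h : ℝ) (hhN : h ∈ N) (hfh : f ≤ h) (hph : 0 < p h)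
    (BRN BR1 : ℝ → ℝ)
    (hBRN : ∀ x : ℝ, IsBestResponse N p x (BRN x))
    (hBR1 : ∀ x : ℝ, IsBestResponse {h} p x (BR1 x)) :
    (∀ x : ℝ, x < f → h ≤ BRN x → h ≤ BR1 x) ∧
    {x : ℝ | x < f ∧ h ≤ BRN x} ⊆ {x : ℝ | x < f ∧ h ≤ BR1 x} := by
  have main : ∀ x : ℝ, x < f → h ≤ BRN x → h ≤ BR1 x := by
    intro x hxf hBR
    have hxh : x < h := lt_of_lt_of_le hxf hfh
    set z := BRN x with hz
    obtain ⟨hxz, hmax, hleast⟩ := hBRN x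
    have hxltz : x < z := lt_of_lt_of_le hxh hBR
    -- strict improvement at z over staying at x
    have hstrict : postUtil N p x x < postUtil N p x z := by
      rcases lt_or_eq_of_le (hmax x le_rfl) with hlt | heq
      · exact hlt
      · exact absurd (hleast x le_rfl heq) (not_le.mpr hxltz)
    -- compute utilities under N
    have hFx : (0:ℝ) ≤ ∑ t ∈ N.filter (fun t => t ≤ x), p t :=
      Finset.sum_nonneg fun t ht => hp t (Finset.mem_filter.mp ht).1
    have hFz : (∑ t ∈ N.filter (fun t => t ≤ z), p t) ≤ 1 := by
      rw [← hsum]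
      exact Finset.sum_le_sum_of_subset_of_nonneg (Finset.filter_subset _ _)
        (fun t ht _ => hp t ht)
    have hux : postUtil N p x x = ∑ t ∈ N.filter (fun t => t ≤ x), p t := by
      simp [postUtil, hsum]
    have huz : postUtil N p x z = (∑ t ∈ N.filter (fun t => t ≤ z), p t) - (z - x) := by
      rw [postUtil, hsum, div_one, abs_of_nonneg (by linarith)]
    have hkey : h - x < 1 := by
      rw [hux, huz] at hstrict
      linarith
    -- now under {h}
    obtain ⟨hx1, hmax1, _⟩ := hBR1 x
    by_contra hcon
    push_neg at hcon
    have hfilter_h : ({h} : Finset ℝ).filter (fun t => t ≤ h) = {h} := by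
      simp [Finset.filter_singleton]
    have hsum_h : ∑ t ∈ ({h} : Finset ℝ), p t = p h := by simp
    have huh : postUtil {h} p x h = 1 - (h - x) := by
      rw [postUtil, hfilter_h, hsum_h,
        div_self (ne_of_gt hph), abs_of_nonneg (by linarith)]
    have hfilter_br : ({h} : Finset ℝ).filter (fun t => t ≤ BR1 x) = ∅ := by
      rw [Finset.filter_singleton, if_neg (not_le.mpr hcon)]
    have hubr : postUtil {h} p x (BR1 x) = -|BR1 x - x| := by
      rw [postUtil, hfilter_br]
      simp
    have := hmax1 h (le_of_lt hxh)
    rw [huh, hubr] at this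
    have habs : (0:ℝ) ≤ |BR1 x - x| := abs_nonneg _
    linarith
  exact ⟨main, fun x hx => ⟨hx.1, main x hx.1 hx.2⟩⟩
end

section
/- In the one-dimensional strategic classification setting with releases, fix a finite prior support N ⊆ ℝ with nonnegative weights p summing to 1, a ground-truth threshold f and a deployed threshold h ∈ N with f ≤ h and p h > 0. Then for every x with f ≤ x and every released H with h ∈ H ⊆ N: if BR_{{h}}(x) < h (the agent fails h under full-information release {h}), then BR_H(x) < h (the agent also fails h under the release H). Consequently {x : x ≥ f and BR_{{h}}(x) < h} ⊆ {x : x ≥ f and BR_H(x) < h} for every such H, so for every data distribution the false negative rate is minimized by full-information release. (Theorem 'fpr-fnr', part 2: FNR({h}) ≤ FNR(H) for every H containing h.) -/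
/-- Theorem `fpr-fnr`, part 2 (`FNR({h}) ≤ FNR(H)` for every release `H ∋ h`): every
agent `x ≥ f` that fails the deployed threshold `h` under full-information release `{h}`
also fails `h` under any truthful release `H` with `h ∈ H ⊆ N`; hence the false
negatives under full-information release are a subset of those under any release. -/
theorem stmt13 (N : Finset ℝ) (p : ℝ → ℝ) (hp : ∀ t ∈ N, 0 ≤ p t)
    (hsum : ∑ t ∈ N, p t = 1) (f h : ℝ) (hhN : h ∈ N) (hfh : f ≤ h) (hph : 0 < p h)
    (BR1 : ℝ → ℝ) (hBR1 : ∀ x : ℝ, IsBestResponse {h} p x (BR1 x)) :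
    ∀ H : Finset ℝ, h ∈ H → H ⊆ N →
      ∀ BRH : ℝ → ℝ, (∀ x : ℝ, IsBestResponse H p x (BRH x)) →
        (∀ x : ℝ, f ≤ x → BR1 x < h → BRH x < h) ∧
        {x : ℝ | f ≤ x ∧ BR1 x < h} ⊆ {x : ℝ | f ≤ x ∧ BRH x < h} := by
  intro H hH hHN BRH hBRH
  have key : ∀ x : ℝ, f ≤ x → BR1 x < h → BRH x < h := by
    intro x hfx hlt
    have hPpos : 0 < ∑ t ∈ H, p t := by
      have := Finset.single_le_sum (f := p) (fun t ht => hp t (hHN ht)) hH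
      linarith
    obtain ⟨hx1, hmax1, _⟩ := hBR1 x
    obtain ⟨hx2, hmax2, hleast2⟩ := hBRH x
    -- Step 1: 1 ≤ h - x
    have h1 : 1 ≤ h - x := by
      by_contra hc
      push_neg at hc
      have hxh : x < h := lt_of_le_of_lt hx1 hlt
      have hu_h : postUtil {h} p x h = 1 - (h - x) := by
        unfold postUtil
        rw [Finset.filter_singleton, if_pos le_rfl, Finset.sum_singleton,
          div_self (ne_of_gt hph),
          abs_of_nonneg (by linarith : (0:ℝ) ≤ h - x)]
      have hu_br : postUtil {h} p x (BR1 x) ≤ 0 := by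
        unfold postUtil
        rw [Finset.filter_singleton, if_neg (not_le.mpr hlt)]
        simp only [Finset.sum_empty, zero_div, zero_sub]
        exact neg_nonpos.mpr (abs_nonneg _)
      have := hmax1 h (le_of_lt hxh)
      rw [hu_h] at this
      linarith
    have hxh : x < h := by linarith
    -- Step 2: BRH x < h
    by_contra hc
    push_neg at hc
    have hSle : ∑ t ∈ H.filter (fun t => t ≤ BRH x), p t ≤ ∑ t ∈ H, p t :=
      Finset.sum_le_sum_of_subset_of_nonneg (Finset.filter_subset _ _)
        (fun t ht _ => hp t (hHN ht))
    have hu_br : postUtil H p x (BRH x) ≤ 0 := by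
      unfold postUtil
      rw [abs_of_nonneg (by linarith : (0:ℝ) ≤ BRH x - x)]
      have : (∑ t ∈ H.filter (fun t => t ≤ BRH x), p t) / (∑ t ∈ H, p t) ≤ 1 :=
        (div_le_one hPpos).mpr hSle
      linarith
    have hu_x : 0 ≤ postUtil H p x x := by
      unfold postUtil
      simp only [sub_self, abs_zero, sub_zero]
      exact div_nonneg (Finset.sum_nonneg fun t ht =>
        hp t (hHN (Finset.filter_subset _ _ ht))) (le_of_lt hPpos)
    have hmx := hmax2 x le_rfl
    have heq : postUtil H p x x = postUtil H p x (BRH x) := le_antisymm hmx (by linarith)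
    have := hleast2 x le_rfl heq
    linarith
  exact ⟨key, fun x hx => ⟨hx.1, key x hx.1 hx.2⟩⟩
end

section
/- There is an instance in which optimal partial information release strictly beats full information release even when the deployed classifier is optimal for full release. Concretely, let X = {x₁, x₂} with D(x₁) = 2/3, D(x₂) = 1/3, true labels f(x₁) = 1, f(x₂) = 0, costs c(x₁, x₂) = 2, c(x₂, x₁) = 3/4, c(x, x) = 0, and hypotheses h₁, h₂, h₃ : X → {0,1} given by h₁(x₁)=1, h₁(x₂)=0; h₂(x₁)=0, h₂(x₂)=1; h₃(x₁)=h₃(x₂)=0, with uniform prior π on {h₁, h₂, h₃}. Then: (i) for every h ∈ {h₁, h₂, h₃}, deploying h and releasing {h} yields learner utility U({h}) = Pr_{x∼D}[h(BR(x, {h})) = f(x)] at most 2/3, with the maximum 2/3 attained at h = h₁; and (ii) deploying h₁ and releasing H* = {h₁, h₂} yields U(H*) = 1 > 2/3. (Example 'Partial vs. Full Information Release'.) -/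
/-- The agent space `X = {x₁, x₂}` encoded as `Fin 2` (index `0 ↦ x₁`, `1 ↦ x₂`);
true labels `f(x₁) = 1`, `f(x₂) = 0`. -/
def exF : Fin 2 → Bool := ![true, false]

/-- The data distribution: `D(x₁) = 2/3`, `D(x₂) = 1/3`. -/
noncomputable def exD : Fin 2 → ℝ := ![2 / 3, 1 / 3]

/-- Manipulation costs: `c(x₁, x₂) = 2`, `c(x₂, x₁) = 3/4`, `c(x, x) = 0`. -/
noncomputable def exCost : Fin 2 → Fin 2 → ℝ := ![![0, 2], ![3 / 4, 0]]

/-- The hypothesis class `{h₁, h₂, h₃}` encoded as `Fin 3`: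
`h₁(x₁)=1, h₁(x₂)=0`; `h₂(x₁)=0, h₂(x₂)=1`; `h₃ ≡ 0`. Note `h₁ = f`. -/
def exHyp : Fin 3 → Fin 2 → Bool := ![![true, false], ![false, true], ![false, false]]

/-- Under the uniform prior on `{h₁, h₂, h₃}` and a released subset `H'`, the utility of
agent `x` from moving to `x'`: the posterior probability of a positive outcome minus the
manipulation cost. -/
noncomputable def exUtil (H' : Finset (Fin 3)) (x x' : Fin 2) : ℝ :=
  ((H'.filter (fun i => exHyp i x' = true)).card : ℝ) / (H'.card : ℝ) - exCost x x'

/-- `z` is a best response of agent `x` to the released subset `H'`: it maximizes the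
utility, and ties among maximizers are broken in favor of the lowest cost. -/
def exIsBR (H' : Finset (Fin 3)) (x z : Fin 2) : Prop :=
  (∀ w : Fin 2, exUtil H' x w ≤ exUtil H' x z) ∧
    (∀ w : Fin 2, (∀ v : Fin 2, exUtil H' x v ≤ exUtil H' x w) →
      exCost x z ≤ exCost x w)

/-- The learner's utility when deploying hypothesis `k` and agents respond via `BR`:
the `D`-probability that the deployed classifier agrees with the true label after
best responses. -/
noncomputable def exU (k : Fin 3) (BR : Fin 2 → Fin 2) : ℝ :=
  ∑ x : Fin 2, exD x * (if exHyp k (BR x) = exF x then 1 else 0)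


lemma brEq {H' : Finset (Fin 3)} {x z : Fin 2} (a : Fin 2) (h : exIsBR H' x z)
    (hlt : ∀ w : Fin 2, w ≠ a → exUtil H' x w < exUtil H' x a) : z = a := by
  by_contra hne
  have h1 := h.1 a
  have h2 := hlt z hne
  linarith

/-- Example `Partial vs. Full Information Release`: (i) full information release of any
deployed `h ∈ {h₁, h₂, h₃}` yields learner utility at most `2/3`, with the maximum
`2/3` attained at `h = h₁`; (ii) deploying `h₁` and releasing `H* = {h₁, h₂}` yields
utility `1 > 2/3`. -/
theorem stmt17 :
    (∀ k : Fin 3, ∀ BR : Fin 2 → Fin 2,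
      (∀ x : Fin 2, exIsBR {k} x (BR x)) → exU k BR ≤ 2 / 3) ∧
    (∀ BR : Fin 2 → Fin 2,
      (∀ x : Fin 2, exIsBR {(0 : Fin 3)} x (BR x)) → exU 0 BR = 2 / 3) ∧
    (∀ BR : Fin 2 → Fin 2,
      (∀ x : Fin 2, exIsBR ({0, 1} : Finset (Fin 3)) x (BR x)) →
        exU 0 BR = 1 ∧ (1 : ℝ) > 2 / 3) := by
  refine ⟨?_, ?_, ?_⟩
  · intro k BR hBR
    fin_cases k
    · have h0 : BR 0 = 0 := by
        refine brEq 0 (hBR 0) ?_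
        intro w hw
        fin_cases w
        · exact absurd rfl hw
        · norm_num [exUtil, exCost, exHyp, Finset.filter_singleton]
      have h1 : BR 1 = 0 := by
        refine brEq 0 (hBR 1) ?_
        intro w hw
        fin_cases w
        · exact absurd rfl hw
        · norm_num [exUtil, exCost, exHyp, Finset.filter_singleton]
      norm_num [exU, Fin.sum_univ_two, h0, h1, exD, exHyp, exF]
    · have h0 : BR 0 = 0 := by
        refine brEq 0 (hBR 0) ?_
        intro w hw
        fin_cases w
        · exact absurd rfl hw
        · norm_num [exUtil, exCost, exHyp, Finset.filter_singleton]
      have h1 : BR 1 = 1 := by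
        refine brEq 1 (hBR 1) ?_
        intro w hw
        fin_cases w
        · norm_num [exUtil, exCost, exHyp, Finset.filter_singleton]
        · exact absurd rfl hw
      norm_num [exU, Fin.sum_univ_two, h0, h1, exD, exHyp, exF]
    · have h0 : BR 0 = 0 := by
        refine brEq 0 (hBR 0) ?_
        intro w hw
        fin_cases w
        · exact absurd rfl hw
        · norm_num [exUtil, exCost, exHyp, Finset.filter_singleton]
      have h1 : BR 1 = 1 := by
        refine brEq 1 (hBR 1) ?_
        intro w hw
        fin_cases w
        · norm_num [exUtil, exCost, exHyp, Finset.filter_singleton]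
        · exact absurd rfl hw
      norm_num [exU, Fin.sum_univ_two, h0, h1, exD, exHyp, exF]
  · intro BR hBR
    have h0 : BR 0 = 0 := by
      refine brEq 0 (hBR 0) ?_
      intro w hw
      fin_cases w
      · exact absurd rfl hw
      · norm_num [exUtil, exCost, exHyp, Finset.filter_singleton]
    have h1 : BR 1 = 0 := by
      refine brEq 0 (hBR 1) ?_
      intro w hw
      fin_cases w
      · exact absurd rfl hw
      · norm_num [exUtil, exCost, exHyp, Finset.filter_singleton]
    norm_num [exU, Fin.sum_univ_two, h0, h1, exD, exHyp, exF]
  · intro BR hBR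
    have h0 : BR 0 = 0 := by
      refine brEq 0 (hBR 0) ?_
      intro w hw
      fin_cases w
      · exact absurd rfl hw
      · norm_num [exUtil, exCost, exHyp, Finset.filter_singleton, Finset.filter_insert]
    have h1 : BR 1 = 1 := by
      refine brEq 1 (hBR 1) ?_
      intro w hw
      fin_cases w
      · norm_num [exUtil, exCost, exHyp, Finset.filter_singleton, Finset.filter_insert]
      · exact absurd rfl hw
    constructor
    · norm_num [exU, Fin.sum_univ_two, h0, h1, exD, exHyp, exF]
    · norm_num
end

section
/- There is an instance in which neither full-information release nor no-information release is optimal for the learner's false positive rate, while an intermediate release achieves zero error. Concretely, let the prior put weights p(0.1) = 0.2, p(0.5) = 0.1, p(0.7) = 0.7 on the thresholds N = {0.1, 0.5, 0.7}; let the deployed threshold be h = 0.5 and the ground-truth threshold f = 0.3; and consider the agents x₁ = 0 (true label 0) and x₂ = 0.4 (true label 1). Then: BR_{{0.5}}(0) = 0.5 and BR_N(0) = 0.7, so x₁ is a false positive (its best response passes h = 0.5) under both full-information release {0.5} and no-information release N; whereas BR_{{0.1, 0.5}}(0) = 0.1 < 0.5 and BR_{{0.1, 0.5}}(0.4) = 0.5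 ≥ 0.5, so releasing the intermediate set {0.1, 0.5} classifies both agents correctly (zero false positive rate and perfect accuracy on {x₁, x₂}). (Claim 'fpr': intermediate release can strictly beat both extremes.) -/
/-- The prior on `N = {0.1, 0.5, 0.7}`: `p(0.1) = 0.2`, `p(0.5) = 0.1`, `p(0.7) = 0.7`. -/
noncomputable def exPrior : ℝ → ℝ :=
  fun t => if t = 0.1 then 0.2 else if t = 0.5 then 0.1 else if t = 0.7 then 0.7 else 0

/-- Best responses are unique. -/
lemma br_uniq {H : Finset ℝ} {p : ℝ → ℝ} {x z z' : ℝ}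
    (h1 : IsBestResponse H p x z) (h2 : IsBestResponse H p x z') : z = z' := by
  have heq : postUtil H p x z' = postUtil H p x z :=
    le_antisymm (h1.2.1 z' h2.1) (h2.2.1 z h1.1)
  exact le_antisymm (h1.2.2 z' h2.1 heq) (h2.2.2 z h1.1 heq.symm)

lemma sum2 (g : ℝ → ℝ) : ∑ t ∈ ({0.1, 0.5} : Finset ℝ), g t = g 0.1 + g 0.5 := by
  rw [show ({0.1, 0.5} : Finset ℝ) = insert 0.1 {0.5} from rfl,
    Finset.sum_insert (by norm_num), Finset.sum_singleton]

lemma sum3 (g : ℝ → ℝ) :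
    ∑ t ∈ ({0.1, 0.5, 0.7} : Finset ℝ), g t = g 0.1 + g 0.5 + g 0.7 := by
  rw [show ({0.1, 0.5, 0.7} : Finset ℝ) = insert 0.1 (insert 0.5 {0.7}) from rfl,
    Finset.sum_insert (by norm_num), Finset.sum_insert (by norm_num), Finset.sum_singleton]
  ring

lemma eval1 (x w : ℝ) :
    postUtil ({0.5} : Finset ℝ) exPrior x w =
      (if (0.5:ℝ) ≤ w then (1:ℝ) else 0) - |w - x| := by
  unfold postUtil
  rw [Finset.sum_filter, Finset.sum_singleton, Finset.sum_singleton]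
  simp only [exPrior]
  split_ifs <;> norm_num

lemma eval2 (x w : ℝ) :
    postUtil ({0.1, 0.5} : Finset ℝ) exPrior x w =
      ((if (0.1:ℝ) ≤ w then (0.2:ℝ) else 0) + (if (0.5:ℝ) ≤ w then (0.1:ℝ) else 0)) / 0.3
        - |w - x| := by
  unfold postUtil
  rw [Finset.sum_filter, sum2, sum2]
  simp only [exPrior]
  norm_num

lemma eval3 (x w : ℝ) :
    postUtil ({0.1, 0.5, 0.7} : Finset ℝ) exPrior x w =
      ((if (0.1:ℝ) ≤ w then (0.2:ℝ) else 0) + (if (0.5:ℝ) ≤ w then (0.1:ℝ) else 0)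
        + (if (0.7:ℝ) ≤ w then (0.7:ℝ) else 0)) - |w - x| := by
  unfold postUtil
  rw [Finset.sum_filter, sum3, sum3]
  simp only [exPrior]
  norm_num

lemma br1 : IsBestResponse ({0.5} : Finset ℝ) exPrior 0 0.5 := by
  have hz : postUtil ({0.5} : Finset ℝ) exPrior 0 0.5 = 0.5 := by
    rw [eval1, abs_of_nonneg (by norm_num : (0:ℝ) ≤ 0.5 - 0)]; norm_num
  refine ⟨by norm_num, ?_, ?_⟩
  · intro w hw
    rw [hz, eval1, abs_of_nonneg (by linarith)]
    split_ifs <;> linarith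
  · intro w hw h
    rw [hz, eval1, abs_of_nonneg (by linarith)] at h
    split_ifs at h <;> linarith

lemma br2 : IsBestResponse ({0.1, 0.5, 0.7} : Finset ℝ) exPrior 0 0.7 := by
  have hz : postUtil ({0.1, 0.5, 0.7} : Finset ℝ) exPrior 0 0.7 = 0.3 := by
    rw [eval3, abs_of_nonneg (by norm_num : (0:ℝ) ≤ 0.7 - 0)]; norm_num
  refine ⟨by norm_num, ?_, ?_⟩
  · intro w hw
    rw [hz, eval3, abs_of_nonneg (by linarith)]
    split_ifs <;> linarith
  · intro w hw h
    rw [hz, eval3, abs_of_nonneg (by linarith)] at h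
    split_ifs at h <;> linarith

lemma br3 : IsBestResponse ({0.1, 0.5} : Finset ℝ) exPrior 0 0.1 := by
  have hz : postUtil ({0.1, 0.5} : Finset ℝ) exPrior 0 0.1 = 0.2 / 0.3 - 0.1 := by
    rw [eval2, abs_of_nonneg (by norm_num : (0:ℝ) ≤ 0.1 - 0)]; norm_num
  refine ⟨by norm_num, ?_, ?_⟩
  · intro w hw
    rw [hz, eval2, abs_of_nonneg (by linarith)]
    split_ifs <;> norm_num <;> linarith
  · intro w hw h
    rw [hz, eval2, abs_of_nonneg (by linarith)] at h
    split_ifs at h <;> norm_num at h <;> linarith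

lemma br4 : IsBestResponse ({0.1, 0.5} : Finset ℝ) exPrior 0.4 0.5 := by
  have hz : postUtil ({0.1, 0.5} : Finset ℝ) exPrior 0.4 0.5 = 0.3 / 0.3 - 0.1 := by
    rw [eval2, abs_of_nonneg (by norm_num : (0:ℝ) ≤ 0.5 - 0.4)]; norm_num
  refine ⟨by norm_num, ?_, ?_⟩
  · intro w hw
    rw [hz, eval2, abs_of_nonneg (by linarith)]
    split_ifs <;> norm_num <;> linarith
  · intro w hw h
    rw [hz, eval2, abs_of_nonneg (by linarith)] at h
    split_ifs at h <;> norm_num at h <;> linarith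

/-- Claim `fpr`: with deployed threshold `h = 0.5`, ground truth `f = 0.3`, and agents
`x₁ = 0` (label 0) and `x₂ = 0.4` (label 1):
under full-information release `{0.5}`, `BR(0) = 0.5 ≥ 0.5` (a false positive);
under no-information release `N = {0.1, 0.5, 0.7}`, `BR(0) = 0.7 ≥ 0.5` (a false
positive); under the intermediate release `{0.1, 0.5}`, `BR(0) = 0.1 < 0.5` and
`BR(0.4) = 0.5 ≥ 0.5`, so both agents are classified correctly. -/
theorem stmt19 :
    (∀ BRfull : ℝ → ℝ,
      (∀ x : ℝ, IsBestResponse ({0.5} : Finset ℝ) exPrior x (BRfull x)) →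
        BRfull 0 = 0.5 ∧ (0.5 : ℝ) ≤ BRfull 0) ∧
    (∀ BRN : ℝ → ℝ,
      (∀ x : ℝ, IsBestResponse ({0.1, 0.5, 0.7} : Finset ℝ) exPrior x (BRN x)) →
        BRN 0 = 0.7 ∧ (0.5 : ℝ) ≤ BRN 0) ∧
    (∀ BRmid : ℝ → ℝ,
      (∀ x : ℝ, IsBestResponse ({0.1, 0.5} : Finset ℝ) exPrior x (BRmid x)) →
        BRmid 0 = 0.1 ∧ BRmid 0.4 = 0.5 ∧ BRmid 0 < 0.5 ∧ (0.5 : ℝ) ≤ BRmid 0.4) := by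
  refine ⟨fun B hB => ?_, fun B hB => ?_, fun B hB => ?_⟩
  · have h := br_uniq (hB 0) br1
    exact ⟨h, by rw [h]⟩
  · have h := br_uniq (hB 0) br2
    exact ⟨h, by rw [h]; norm_num⟩
  · have h1 := br_uniq (hB 0) br3
    have h2 := br_uniq (hB 0.4) br4
    exact ⟨h1, h2, by rw [h1]; norm_num, by rw [h2]⟩
end
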